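/- arXiv:0711.3818 — 4 statements merged into one kernel-verified Lean document; each statement's English description precedes it below -/
import Mathlib

section
/- Let A_0, A_1 ∈ SL(2,Z) be matrices with all entries positive. Then there exist constants 1 < λ ≤ Λ and C_0 ≥ 1 such that for every n ∈ N, every sequence (i_1, …, i_n) ∈ {0,1}^n, and every vector v ∈ R^2 with v_1 v_2 ≥ 0: C_0^{-1} λ^n ‖v‖ ≤ ‖A_{i_1} ⋯ A_{i_n} v‖ ≤ C_0 Λ^n ‖v‖. -/
/-!
Integer matrices with positive entries have entries `≥ 1`, so every column sum lies in
`[2, K]` for a fixed `K`. On the nonnegative quadrant such a matrix therefore multiplies the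
coordinate sum `v₀ + v₁` by a factor in `[2, K]`, and it keeps the quadrant invariant, so a
product of `n` factors multiplies it by a factor in `[2ⁿ, Kⁿ]`. The coordinate sum is comparable
to the Euclidean norm up to a factor `2` on the quadrant, and the cone `v₀ v₁ ≥ 0` is the
quadrant together with its negative.
-/

open Matrix

noncomputable def eucNorm2 (v : Fin 2 → ℝ) : ℝ := Real.sqrt (v 0 ^ 2 + v 1 ^ 2)

section ColumnSums

variable {ι : Type*} [Fintype ι]

theorem sum_mulVec_eq_sum_colSum_mul (B : Matrix ι ι ℝ) (w : ι → ℝ) :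
    ∑ i, (B *ᵥ w) i = ∑ j, (∑ i, B i j) * w j := by
  simp only [mulVec, dotProduct, Finset.sum_mul]
  exact Finset.sum_comm

theorem sum_mulVec_bounds_of_colSum_bounds {c C : ℝ} {B : Matrix ι ι ℝ}
    (hB : ∀ i j, 0 ≤ B i j) (hcol : ∀ j, c ≤ ∑ i, B i j ∧ ∑ i, B i j ≤ C)
    {w : ι → ℝ} (hw : 0 ≤ w) :
    0 ≤ B *ᵥ w ∧ c * ∑ i, w i ≤ ∑ i, (B *ᵥ w) i ∧ ∑ i, (B *ᵥ w) i ≤ C * ∑ i, w i := by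
  refine ⟨fun i => Finset.sum_nonneg fun j _ => mul_nonneg (hB i j) (hw j), ?_, ?_⟩
  · rw [sum_mulVec_eq_sum_colSum_mul, Finset.mul_sum]
    exact Finset.sum_le_sum fun j _ => mul_le_mul_of_nonneg_right (hcol j).1 (hw j)
  · rw [sum_mulVec_eq_sum_colSum_mul, Finset.mul_sum]
    exact Finset.sum_le_sum fun j _ => mul_le_mul_of_nonneg_right (hcol j).2 (hw j)

theorem sum_list_prod_mulVec_bounds [DecidableEq ι] [Nonempty ι] {c C : ℝ} (hc : 0 ≤ c)
    (L : List (Matrix ι ι ℝ))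
    (hL : ∀ B ∈ L, (∀ i j, 0 ≤ B i j) ∧ ∀ j, c ≤ ∑ i, B i j ∧ ∑ i, B i j ≤ C)
    {w : ι → ℝ} (hw : 0 ≤ w) :
    0 ≤ L.prod *ᵥ w ∧ c ^ L.length * ∑ i, w i ≤ ∑ i, (L.prod *ᵥ w) i ∧
      ∑ i, (L.prod *ᵥ w) i ≤ C ^ L.length * ∑ i, w i := by
  induction L with
  | nil => simpa using hw
  | cons B L ih =>
    obtain ⟨hu, hlow, hupp⟩ := ih fun B' hB' => hL B' (List.mem_cons_of_mem _ hB')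
    obtain ⟨hB, hcol⟩ := hL B List.mem_cons_self
    obtain ⟨hBu, hBlow, hBupp⟩ := sum_mulVec_bounds_of_colSum_bounds hB hcol hu
    have hC : 0 ≤ C := (hc.trans (hcol (Classical.arbitrary ι)).1).trans (hcol _).2
    rw [List.prod_cons, ← mulVec_mulVec, List.length_cons, pow_succ', pow_succ', mul_assoc,
      mul_assoc]
    exact ⟨hBu, hBlow.trans' (mul_le_mul_of_nonneg_left hlow hc),
      hBupp.trans (mul_le_mul_of_nonneg_left hupp hC)⟩

end ColumnSums

theorem eucNorm2_le_add_of_nonneg {w : Fin 2 → ℝ} (hw : 0 ≤ w) : eucNorm2 w ≤ w 0 + w 1 := by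
  have h0 : 0 ≤ w 0 := hw 0
  have h1 : 0 ≤ w 1 := hw 1
  rw [eucNorm2, Real.sqrt_le_left (by positivity)]
  nlinarith

theorem add_le_two_mul_eucNorm2_of_nonneg {w : Fin 2 → ℝ} (hw : 0 ≤ w) :
    w 0 + w 1 ≤ 2 * eucNorm2 w := by
  have h0 : 0 ≤ w 0 := hw 0
  have h1 : 0 ≤ w 1 := hw 1
  rw [← div_le_iff₀' two_pos, eucNorm2, Real.le_sqrt (by positivity) (by positivity)]
  nlinarith [sq_nonneg (w 0 - w 1)]

theorem eucNorm2_neg (v : Fin 2 → ℝ) : eucNorm2 (-v) = eucNorm2 v := by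
  simp [eucNorm2]

theorem eucNorm2_mulVec_bounds_of_mem_cone {P : Matrix (Fin 2) (Fin 2) ℝ} {c C : ℝ}
    (hc : 0 ≤ c) (hC : 0 ≤ C)
    (hP : ∀ w : Fin 2 → ℝ, 0 ≤ w → 0 ≤ P *ᵥ w ∧ c * ∑ i, w i ≤ ∑ i, (P *ᵥ w) i ∧
      ∑ i, (P *ᵥ w) i ≤ C * ∑ i, w i)
    {v : Fin 2 → ℝ} (hv : 0 ≤ v 0 * v 1) :
    2⁻¹ * c * eucNorm2 v ≤ eucNorm2 (P *ᵥ v) ∧ eucNorm2 (P *ᵥ v) ≤ 2 * C * eucNorm2 v := by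
  suffices h : ∀ w : Fin 2 → ℝ, 0 ≤ w →
      2⁻¹ * c * eucNorm2 w ≤ eucNorm2 (P *ᵥ w) ∧ eucNorm2 (P *ᵥ w) ≤ 2 * C * eucNorm2 w by
    rcases mul_nonneg_iff.mp hv with ⟨h0, h1⟩ | ⟨h0, h1⟩
    · exact h v (Pi.le_def.mpr (Fin.forall_fin_two.mpr ⟨h0, h1⟩))
    · simpa only [mulVec_neg, eucNorm2_neg] using
        h (-v) (Pi.le_def.mpr (Fin.forall_fin_two.mpr ⟨neg_nonneg.mpr h0, neg_nonneg.mpr h1⟩))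
  intro w hw
  obtain ⟨hPw, hlow, hupp⟩ := hP w hw
  simp only [Fin.sum_univ_two] at hlow hupp
  have hw1 := eucNorm2_le_add_of_nonneg hw
  have hw2 := add_le_two_mul_eucNorm2_of_nonneg hw
  have hPw1 := eucNorm2_le_add_of_nonneg hPw
  have hPw2 := add_le_two_mul_eucNorm2_of_nonneg hPw
  constructor
  · nlinarith
  · nlinarith

theorem stmt5_general (A : Fin 2 → Matrix (Fin 2) (Fin 2) ℤ)
    (hpos : ∀ i r s, 0 < (A i) r s) :
    ∃ lam Lam C0 : ℝ, 1 < lam ∧ lam ≤ Lam ∧ 1 ≤ C0 ∧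
      ∀ (n : ℕ) (idx : Fin n → Fin 2) (v : Fin 2 → ℝ), 0 ≤ v 0 * v 1 →
        C0⁻¹ * lam ^ n * eucNorm2 v
            ≤ eucNorm2 (((List.ofFn fun j => (A (idx j)).map
                (fun z : ℤ => (z : ℝ))).prod).mulVec v) ∧
        eucNorm2 (((List.ofFn fun j => (A (idx j)).map
                (fun z : ℤ => (z : ℝ))).prod).mulVec v)
            ≤ C0 * Lam ^ n * eucNorm2 v := by
  set K : ℝ := ∑ i, ∑ r, ∑ s, (A i r s : ℝ)
  have hentry : ∀ i r s, (1 : ℝ) ≤ A i r s := fun i r s => by exact_mod_cast hpos i r s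
  have hnonneg : ∀ i r s, (0 : ℝ) ≤ A i r s := fun i r s => zero_le_one.trans (hentry i r s)
  have hcol : ∀ i s, 2 ≤ ∑ r, (A i r s : ℝ) ∧ ∑ r, (A i r s : ℝ) ≤ K := by
    intro i s
    refine ⟨by linarith [Fin.sum_univ_two fun r => (A i r s : ℝ), hentry i 0 s, hentry i 1 s], ?_⟩
    calc ∑ r, (A i r s : ℝ) ≤ ∑ r, ∑ s', (A i r s' : ℝ) :=
          Finset.sum_le_sum fun r _ => Finset.single_le_sum (fun s' _ => hnonneg i r s') (by simp)
      _ ≤ K := Finset.single_le_sum (f := fun i => ∑ r, ∑ s', (A i r s' : ℝ))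
          (fun i _ => Finset.sum_nonneg fun r _ => Finset.sum_nonneg fun s' _ => hnonneg i r s')
          (by simp)
  have hK : 2 ≤ K := (hcol 0 0).1.trans (hcol 0 0).2
  refine ⟨2, K, 2, one_lt_two, hK, one_le_two, ?_⟩
  intro n idx v hv
  have hfactors : ∀ B ∈ List.ofFn fun j => (A (idx j)).map (fun z : ℤ => (z : ℝ)),
      (∀ r s, 0 ≤ B r s) ∧ ∀ s, 2 ≤ ∑ r, B r s ∧ ∑ r, B r s ≤ K := by
    simp only [List.forall_mem_ofFn_iff, map_apply]
    exact fun j => ⟨hnonneg (idx j), hcol (idx j)⟩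
  simpa using eucNorm2_mulVec_bounds_of_mem_cone (by positivity)
    (pow_nonneg (zero_le_two.trans hK) n)
    (fun w hw => by simpa using sum_list_prod_mulVec_bounds zero_le_two _ hfactors hw) hv

/-- For matrices `A₀, A₁ ∈ SL(2,ℤ)` with positive entries there are `1 < λ ≤ Λ` and
`C₀ ≥ 1` such that every product `A_{i₁} ⋯ A_{i_n}` expands vectors in the cone
`{v : v₀ v₁ ≥ 0}` at a uniform exponential rate between `λⁿ` and `Λⁿ`. -/
theorem stmt5 (A : Fin 2 → Matrix (Fin 2) (Fin 2) ℤ)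
    (hdet : ∀ i, (A i).det = 1)
    (hpos : ∀ i r s, 0 < (A i) r s) :
    ∃ lam Lam C0 : ℝ, 1 < lam ∧ lam ≤ Lam ∧ 1 ≤ C0 ∧
      ∀ (n : ℕ) (idx : Fin n → Fin 2) (v : Fin 2 → ℝ), 0 ≤ v 0 * v 1 →
        C0⁻¹ * lam ^ n * eucNorm2 v
            ≤ eucNorm2 (((List.ofFn fun j => (A (idx j)).map
                (fun z : ℤ => (z : ℝ))).prod).mulVec v) ∧
        eucNorm2 (((List.ofFn fun j => (A (idx j)).map
                (fun z : ℤ => (z : ℝ))).prod).mulVec v)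
            ≤ C0 * Lam ^ n * eucNorm2 v :=
  stmt5_general A hpos
end

section
/- Let A_0, A_1 ∈ SL(2,Z) have positive entries. Then there exists β > 1 such that A_i^{-1} maps the cone C_- = {v : v_1 v_2 ≤ 0} into the cone C_β = {v : β^{-1} v_1^2 ≤ -v_1 v_2 ≤ β v_1^2}, for i = 0, 1. -/
set_option maxHeartbeats 1000000

lemma core6 (a b c d β x y z : ℝ) (ha : 1 ≤ a) (hb : 1 ≤ b) (hc : 1 ≤ c) (hd : 1 ≤ d)
    (hβ : (a + b + c + d) ^ 2 ≤ β)
    (hx0 : 0 ≤ x) (hy0 : 0 ≤ y) (hz0 : 0 ≤ z) :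
    β⁻¹ * (d ^ 2 * x + 2 * b * d * y + b ^ 2 * z)
        ≤ c * d * x + (a * d + b * c) * y + a * b * z ∧
    c * d * x + (a * d + b * c) * y + a * b * z
        ≤ β * (d ^ 2 * x + 2 * b * d * y + b ^ 2 * z) := by
  have hβpos : 0 < β := by nlinarith
  have hbd : (0:ℝ) ≤ (b + d) ^ 2 := sq_nonneg _
  have h1 : 1 ≤ c * d := by nlinarith
  have h2 : 1 ≤ a * d + b * c := by nlinarith
  have h3 : 1 ≤ a * b := by nlinarith
  have h4 : (b + d) ^ 2 ≤ β := by
    nlinarith [mul_nonneg (by linarith : (0:ℝ) ≤ a + c) (by linarith : (0:ℝ) ≤ a + 2*b + c + 2*d)]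
  have had : (0:ℝ) ≤ a * d := by nlinarith
  have hbc : (0:ℝ) ≤ b * c := by nlinarith
  have h5 : c * d ≤ β := by
    nlinarith [sq_nonneg (a + b), sq_nonneg (c - d),
      mul_nonneg (by linarith : (0:ℝ) ≤ a + b) (by linarith : (0:ℝ) ≤ c + d)]
  have h6 : a * d + b * c ≤ β := by
    nlinarith [sq_nonneg (a - d), sq_nonneg (b - c),
      mul_nonneg (by linarith : (0:ℝ) ≤ a + d) (by linarith : (0:ℝ) ≤ b + c)]
  have h7 : a * b ≤ β := by
    nlinarith [sq_nonneg (a - b), sq_nonneg (c + d),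
      mul_nonneg (by linarith : (0:ℝ) ≤ a + b) (by linarith : (0:ℝ) ≤ c + d)]
  have hs0 : 0 ≤ x + y + z := by linarith
  have step2 : x + y + z ≤ c * d * x + (a * d + b * c) * y + a * b * z := by
    nlinarith [mul_nonneg hx0 (by linarith : (0:ℝ) ≤ c*d - 1),
      mul_nonneg hy0 (by linarith : (0:ℝ) ≤ a*d + b*c - 1),
      mul_nonneg hz0 (by linarith : (0:ℝ) ≤ a*b - 1)]
  have hP0 : 0 ≤ c * d * x + (a * d + b * c) * y + a * b * z := le_trans hs0 step2
  have step1 : d ^ 2 * x + 2 * b * d * y + b ^ 2 * z ≤ (b + d) ^ 2 * (x + y + z) := by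
    nlinarith [mul_nonneg hx0 (by nlinarith : (0:ℝ) ≤ (b+d)^2 - d^2),
      mul_nonneg hy0 (by nlinarith : (0:ℝ) ≤ (b+d)^2 - 2*b*d),
      mul_nonneg hz0 (by nlinarith : (0:ℝ) ≤ (b+d)^2 - b^2)]
  constructor
  · rw [inv_mul_le_iff₀ hβpos]
    calc d ^ 2 * x + 2 * b * d * y + b ^ 2 * z
        ≤ (b + d) ^ 2 * (x + y + z) := step1
      _ ≤ (b + d) ^ 2 * (c * d * x + (a * d + b * c) * y + a * b * z) :=
          mul_le_mul_of_nonneg_left step2 hbd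
      _ ≤ β * (c * d * x + (a * d + b * c) * y + a * b * z) :=
          mul_le_mul_of_nonneg_right h4 hP0
  · have stepA : c * d * x + (a * d + b * c) * y + a * b * z ≤ β * (x + y + z) := by
      nlinarith [mul_nonneg hx0 (by linarith : (0:ℝ) ≤ β - c*d),
        mul_nonneg hy0 (by linarith : (0:ℝ) ≤ β - (a*d + b*c)),
        mul_nonneg hz0 (by linarith : (0:ℝ) ≤ β - a*b)]
    have stepB : x + y + z ≤ d ^ 2 * x + 2 * b * d * y + b ^ 2 * z := by
      nlinarith [mul_nonneg hx0 (by nlinarith : (0:ℝ) ≤ d^2 - 1),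
        mul_nonneg hy0 (by nlinarith : (0:ℝ) ≤ 2*b*d - 1),
        mul_nonneg hz0 (by nlinarith : (0:ℝ) ≤ b^2 - 1)]
    calc c * d * x + (a * d + b * c) * y + a * b * z
        ≤ β * (x + y + z) := stepA
      _ ≤ β * (d ^ 2 * x + 2 * b * d * y + b ^ 2 * z) :=
          mul_le_mul_of_nonneg_left stepB hβpos.le

lemma aux6 (a b c d β : ℝ) (ha : 1 ≤ a) (hb : 1 ≤ b) (hc : 1 ≤ c) (hd : 1 ≤ d)
    (hβ : (a + b + c + d) ^ 2 ≤ β) (v : ℝ × ℝ) (hv : v.1 * v.2 ≤ 0) :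
    β⁻¹ * (d * v.1 - b * v.2) ^ 2
        ≤ -((d * v.1 - b * v.2) * (-c * v.1 + a * v.2)) ∧
    -((d * v.1 - b * v.2) * (-c * v.1 + a * v.2)) ≤ β * (d * v.1 - b * v.2) ^ 2 := by
  have hP : -((d * v.1 - b * v.2) * (-c * v.1 + a * v.2))
      = c * d * v.1 ^ 2 + (a * d + b * c) * (-(v.1 * v.2)) + a * b * v.2 ^ 2 := by ring
  have hW : (d * v.1 - b * v.2) ^ 2
      = d ^ 2 * v.1 ^ 2 + 2 * b * d * (-(v.1 * v.2)) + b ^ 2 * v.2 ^ 2 := by ring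
  rw [hP, hW]
  exact core6 a b c d β _ _ _ ha hb hc hd hβ (sq_nonneg _) (by linarith) (sq_nonneg _)

/-- For `A₀, A₁ ∈ SL(2,ℤ)` with positive entries (`A_i = [[a,b],[c,d]]`, so
`A_i⁻¹ = [[d,-b],[-c,a]]`) there is `β > 1` such that `A_i⁻¹` maps the cone
`C₋ = {v : v₁ v₂ ≤ 0}` into `C_β = {w : β⁻¹ w₁² ≤ -w₁ w₂ ≤ β w₁²}`. -/
theorem stmt6 (a b c d : Fin 2 → ℤ)
    (hdet : ∀ i, a i * d i - b i * c i = 1)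
    (hpos : ∀ i, 0 < a i ∧ 0 < b i ∧ 0 < c i ∧ 0 < d i) :
    ∃ β : ℝ, 1 < β ∧ ∀ (i : Fin 2) (v : ℝ × ℝ), v.1 * v.2 ≤ 0 →
      β⁻¹ * ((d i : ℝ) * v.1 - (b i : ℝ) * v.2) ^ 2
          ≤ -(((d i : ℝ) * v.1 - (b i : ℝ) * v.2) * (-(c i : ℝ) * v.1 + (a i : ℝ) * v.2)) ∧
      -(((d i : ℝ) * v.1 - (b i : ℝ) * v.2) * (-(c i : ℝ) * v.1 + (a i : ℝ) * v.2))
          ≤ β * ((d i : ℝ) * v.1 - (b i : ℝ) * v.2) ^ 2 := by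
  have key : ∀ i : Fin 2, (1:ℝ) ≤ a i ∧ (1:ℝ) ≤ b i ∧ (1:ℝ) ≤ c i ∧ (1:ℝ) ≤ d i := by
    intro i
    obtain ⟨h1, h2, h3, h4⟩ := hpos i
    refine ⟨?_, ?_, ?_, ?_⟩ <;> exact_mod_cast (by omega : (1:ℤ) ≤ _)
  obtain ⟨ha0, hb0, hc0, hd0⟩ := key 0
  obtain ⟨ha1, hb1, hc1, hd1⟩ := key 1
  refine ⟨((a 0 : ℝ) + b 0 + c 0 + d 0) ^ 2 + ((a 1 : ℝ) + b 1 + c 1 + d 1) ^ 2, ?_, ?_⟩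
  · nlinarith
  · intro i v hv
    fin_cases i
    · exact aux6 _ _ _ _ _ ha0 hb0 hc0 hd0 (by nlinarith) v hv
    · exact aux6 _ _ _ _ _ ha1 hb1 hc1 hd1 (by nlinarith) v hv
end

section
/- Let p, q > 0 and let B^{p,q} denote the completion of C^∞(T^2) under the norm ‖f‖_{p,q} = sup_{E ⊂ C_-, E Lagrangian} Σ_{k ∈ Z^2∖{0}} |f_k| |k|^p/(1+|⟨E,k⟩|^{p+q}) + |f_0|. Then for every f ∈ B^{p,q} and every g ∈ C^q(T^2), |m(fg)| ≤ 2 ‖g‖_{C^q} ‖f‖_{p,q}. -/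
/-- The anisotropic norm `‖f‖_{p,q}` on `𝕋²` at the level of Fourier coefficients:
Lagrangian subspaces `E ⊂ C₋` in `ℝ²` are lines spanned by unit vectors `u` with
`u₁u₂ ≤ 0`, and `⟨E,l⟩ = u·l` (up to sign, with the sup over both signs realized by
the choice of `u`). -/
noncomputable def lineNormPQ (p q : ℝ) (f : (ℤ × ℤ) →₀ ℂ) : ℝ :=
  sSup {r : ℝ | ∃ u : ℝ × ℝ, u.1 ^ 2 + u.2 ^ 2 = 1 ∧ u.1 * u.2 ≤ 0 ∧
      r = ∑ l ∈ f.support.erase 0,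
        ‖f l‖ * Real.sqrt ((l.1 : ℝ) ^ 2 + (l.2 : ℝ) ^ 2) ^ p
          / (1 + |u.1 * (l.1 : ℝ) + u.2 * (l.2 : ℝ)| ^ (p + q))}
    + ‖f 0‖

/-!
Bound `|m(fg)| = |∑ f_l g_{-l}|` termwise. Since `|⟨E,l⟩| ≤ |l|` and `|l| ≥ 1` for `l ≠ 0`,
`1 + |⟨E,l⟩|^{p+q} ≤ 2 |l|^{p+q}`, i.e. `|l|^{-q} ≤ 2 |l|^p / (1 + |⟨E,l⟩|^{p+q})` for every
line `E`; so the decay `|g_l| ≤ ‖g‖_{C^q} |l|^{-q}` bounds each term by `2 ‖g‖_{C^q}` times the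
corresponding term of the sum defining `‖f‖_{p,q}`, already for the single line `E = ℝ × {0}`.
-/

open Finset

noncomputable def lineSum (p q : ℝ) (f : (ℤ × ℤ) →₀ ℂ) (u : ℝ × ℝ) : ℝ :=
  ∑ l ∈ f.support.erase 0,
    ‖f l‖ * Real.sqrt ((l.1 : ℝ) ^ 2 + (l.2 : ℝ) ^ 2) ^ p
      / (1 + |u.1 * (l.1 : ℝ) + u.2 * (l.2 : ℝ)| ^ (p + q))

lemma lineSum_le (p q : ℝ) (f : (ℤ × ℤ) →₀ ℂ) (u : ℝ × ℝ) :
    lineSum p q f u ≤ ∑ l ∈ f.support.erase 0,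
      ‖f l‖ * Real.sqrt ((l.1 : ℝ) ^ 2 + (l.2 : ℝ) ^ 2) ^ p := by
  refine sum_le_sum fun l _ => div_le_self (by positivity) ?_
  exact le_add_of_nonneg_right (by positivity)

lemma lineSum_add_norm_le_lineNormPQ (p q : ℝ) (f : (ℤ × ℤ) →₀ ℂ) {u : ℝ × ℝ}
    (hu : u.1 ^ 2 + u.2 ^ 2 = 1) (hu' : u.1 * u.2 ≤ 0) :
    lineSum p q f u + ‖f 0‖ ≤ lineNormPQ p q f := by
  rw [lineNormPQ]
  gcongr
  refine le_csSup ⟨∑ l ∈ f.support.erase 0,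
    ‖f l‖ * Real.sqrt ((l.1 : ℝ) ^ 2 + (l.2 : ℝ) ^ 2) ^ p, ?_⟩ ⟨u, hu, hu', rfl⟩
  rintro r ⟨v, -, -, rfl⟩
  exact lineSum_le p q f v

lemma one_le_sqrt_intCast_sq_add_sq {l : ℤ × ℤ} (hl : l ≠ 0) :
    1 ≤ Real.sqrt ((l.1 : ℝ) ^ 2 + (l.2 : ℝ) ^ 2) := by
  rw [Real.one_le_sqrt]
  have : (1 : ℤ) ≤ l.1 ^ 2 + l.2 ^ 2 := by
    rcases l with ⟨a, b⟩
    rcases eq_or_ne a 0 with rfl | ha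
    · have hb : b ≠ 0 := fun hb => hl (by simp [hb])
      nlinarith [Int.one_le_abs hb, sq_abs b]
    · nlinarith [Int.one_le_abs ha, sq_abs a, sq_nonneg b]
  exact_mod_cast this

lemma rpow_neg_le_two_mul_rpow_div {N a p q : ℝ} (hN : 1 ≤ N) (ha : |a| ≤ N)
    (hpq : 0 ≤ p + q) :
    N ^ (-q) ≤ 2 * (N ^ p / (1 + |a| ^ (p + q))) := by
  have hN0 : 0 < N := zero_lt_one.trans_le hN
  have hden : 1 + |a| ^ (p + q) ≤ 2 * N ^ (p + q) := by
    have := Real.rpow_le_rpow (abs_nonneg a) ha hpq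
    linarith [Real.one_le_rpow hN hpq]
  rw [mul_div_assoc', le_div_iff₀ (by positivity)]
  calc N ^ (-q) * (1 + |a| ^ (p + q)) ≤ N ^ (-q) * (2 * N ^ (p + q)) := by gcongr
    _ = 2 * N ^ p := by rw [mul_left_comm, ← Real.rpow_add hN0]; ring_nf

lemma sum_le_add_sum_erase {α : Type*} [DecidableEq α] (s : Finset α) (a : α) {F : α → ℝ}
    (hF : ∀ x, 0 ≤ F x) : ∑ x ∈ s, F x ≤ F a + ∑ x ∈ s.erase a, F x := by
  rw [← sum_insert (notMem_erase a s)]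
  exact sum_le_sum_of_subset_of_nonneg (insert_erase_subset a s) fun x _ _ => hF x

lemma abs_mul_add_mul_le_sqrt {u : ℝ × ℝ} (hu : u.1 ^ 2 + u.2 ^ 2 = 1) (a b : ℝ) :
    |u.1 * a + u.2 * b| ≤ Real.sqrt (a ^ 2 + b ^ 2) :=
  Real.abs_le_sqrt (by nlinarith [sq_nonneg (u.1 * b - u.2 * a)])

lemma sum_erase_norm_mul_le_lineSum {p q Cg : ℝ} (hpq : 0 ≤ p + q) (hCg : 0 ≤ Cg)
    (f : (ℤ × ℤ) →₀ ℂ) {g : ℤ × ℤ → ℂ}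
    (hg : ∀ l : ℤ × ℤ, l ≠ 0 →
      ‖g l‖ ≤ Cg * Real.sqrt ((l.1 : ℝ) ^ 2 + (l.2 : ℝ) ^ 2) ^ (-q))
    {u : ℝ × ℝ} (hu : u.1 ^ 2 + u.2 ^ 2 = 1) :
    ∑ l ∈ f.support.erase 0, ‖f l‖ * ‖g (-l)‖ ≤ 2 * Cg * lineSum p q f u := by
  rw [lineSum, mul_sum]
  refine sum_le_sum fun l hl => ?_
  have hl0 := ne_of_mem_erase hl
  have hgl := hg (-l) (neg_ne_zero.2 hl0)
  simp only [Prod.fst_neg, Prod.snd_neg, Int.cast_neg, neg_sq] at hgl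
  have hN := rpow_neg_le_two_mul_rpow_div (one_le_sqrt_intCast_sq_add_sq hl0)
    (abs_mul_add_mul_le_sqrt hu _ _) hpq
  calc ‖f l‖ * ‖g (-l)‖ ≤ ‖f l‖ * (Cg * (2 * _)) := by gcongr; exact hgl.trans (by gcongr)
    _ = _ := by ring

/-- `|m(fg)| ≤ 2 ‖g‖_{C^q} ‖f‖_{p,q}`: here `f` is a trigonometric polynomial with
coefficients `f_l`, `g` has Fourier coefficients `g_l` with `|g_l| ≤ Cg |l|^{-q}`
for `l ≠ 0` and `|g_0| ≤ Cg` (`Cg = ‖g‖_{C^q}`), and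
`m(fg) = ∑_l f_l g_{-l}`. -/
theorem stmt9 (p q : ℝ) (hp : 0 < p) (hq : 0 < q)
    (f : (ℤ × ℤ) →₀ ℂ) (g : ℤ × ℤ → ℂ) (Cg : ℝ)
    (hg0 : ‖g 0‖ ≤ Cg)
    (hg : ∀ l : ℤ × ℤ, l ≠ 0 →
      ‖g l‖ ≤ Cg * Real.sqrt ((l.1 : ℝ) ^ 2 + (l.2 : ℝ) ^ 2) ^ (-q)) :
    ‖∑ l ∈ f.support, f l * g (-l)‖ ≤ 2 * Cg * lineNormPQ p q f := by
  have hCg : 0 ≤ Cg := (norm_nonneg _).trans hg0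
  have hu : (1 : ℝ) ^ 2 + (0 : ℝ) ^ 2 = 1 := by norm_num
  calc ‖∑ l ∈ f.support, f l * g (-l)‖ ≤ ∑ l ∈ f.support, ‖f l‖ * ‖g (-l)‖ := by
        simpa only [norm_mul] using norm_sum_le f.support fun l => f l * g (-l)
    _ ≤ ‖f 0‖ * ‖g (-0)‖ + ∑ l ∈ f.support.erase 0, ‖f l‖ * ‖g (-l)‖ :=
        sum_le_add_sum_erase _ _ fun l => by positivity
    _ ≤ 2 * Cg * ‖f 0‖ + 2 * Cg * lineSum p q f (1, 0) := by
        rw [neg_zero]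
        gcongr ?_ + ?_
        · nlinarith [norm_nonneg (f 0)]
        · exact sum_erase_norm_mul_le_lineSum (by positivity) hCg f hg hu
    _ ≤ 2 * Cg * lineNormPQ p q f := by
        rw [← mul_add, add_comm]
        gcongr
        exact lineSum_add_norm_le_lineNormPQ p q f hu (by norm_num)
end

section
/- Let (X_k)_{k≥0} be a stationary zero-mean process with summable correlations as above and suppose the limiting variance Σ² = 0. Then the partial sums Z_N = Σ_{k=0}^{N-1} X_k are uniformly bounded in L²: sup_N E(Z_N²) ≤ 2N Σ_{n≥N} |E(X_0 X_n)| + 2 Σ_{n=1}^{N-1} n |E(X_0 X_n)| ≤ C < ∞. -/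
/-! With `r n = E(X₀ Xₙ)`, stationarity gives `E(Z_{m+1}²) - E(Z_m²) = r 0 + 2 ∑_{n=1}^{m} r n`,
which equals `-2 ∑_{n>m} r n` because `Σ² = 0`. Summing these increments by parts yields
`E(Z_N²) = -2N ∑_{n≥N} r n - 2 ∑_{n<N} n r n`. Both terms are dominated by `∑ n |r n| < ∞`,
since `N ∑_{n≥N} |r n| ≤ ∑_{n≥N} n |r n|`. -/

open MeasureTheory Finset

section TailSums

variable {r : ℕ → ℝ}

lemma tsum_nat_add_eq_add_tsum_succ_add (hr : Summable r) (N : ℕ) :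
    ∑' n, r (N + n) = r N + ∑' n, r (N + 1 + n) := by
  have htail : Summable fun n => r (N + n) := by
    simpa only [add_comm N] using (summable_nat_add_iff N).mpr hr
  rw [htail.tsum_eq_zero_add, add_zero]
  congr 2 with n
  ring_nf

lemma sum_range_tsum_succ_add (hr : Summable r) (N : ℕ) :
    ∑ m ∈ range N, ∑' n, r (m + 1 + n) = N * ∑' n, r (N + n) + ∑ n ∈ range N, n * r n := by
  induction N with
  | zero => simp
  | succ N ih =>
    rw [sum_range_succ, sum_range_succ, ih, tsum_nat_add_eq_add_tsum_succ_add hr N]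
    push_cast
    ring

lemma add_two_mul_sum_range_eq_neg_tsum (hr : Summable r) (h0 : r 0 + 2 * ∑' n, r (n + 1) = 0)
    (m : ℕ) : r 0 + 2 * ∑ n ∈ range m, r (n + 1) = -2 * ∑' n, r (m + 1 + n) := by
  have hsplit := ((summable_nat_add_iff 1).mpr hr).sum_add_tsum_nat_add m
  simp only [show ∀ i, i + m + 1 = m + 1 + i by omega] at hsplit
  linarith

lemma sum_range_add_two_mul_sum_range_eq (hr : Summable r)
    (h0 : r 0 + 2 * ∑' n, r (n + 1) = 0) (N : ℕ) :
    ∑ m ∈ range N, (r 0 + 2 * ∑ n ∈ range m, r (n + 1))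
      = -2 * N * ∑' n, r (N + n) - 2 * ∑ n ∈ range N, n * r n := by
  simp only [add_two_mul_sum_range_eq_neg_tsum hr h0, ← mul_sum, sum_range_tsum_succ_add hr]
  ring

lemma nat_mul_tsum_add_sum_range_le_tsum (hr : Summable fun n : ℕ => n * |r n|) (N : ℕ) :
    N * ∑' n, |r (N + n)| + ∑ n ∈ range N, n * |r n| ≤ ∑' n : ℕ, n * |r n| := by
  have htail : Summable fun n : ℕ => ((N + n : ℕ) : ℝ) * |r (N + n)| := by
    simpa only [add_comm N] using (summable_nat_add_iff N).mpr hr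
  have hle : ∀ n : ℕ, (N : ℝ) * |r (N + n)| ≤ ((N + n : ℕ) : ℝ) * |r (N + n)| := fun n =>
    mul_le_mul_of_nonneg_right (by exact_mod_cast N.le_add_right n) (abs_nonneg _)
  calc N * ∑' n, |r (N + n)| + ∑ n ∈ range N, n * |r n|
      ≤ ∑' n : ℕ, ((N + n : ℕ) : ℝ) * |r (N + n)| + ∑ n ∈ range N, n * |r n| := by
        rw [← tsum_mul_left]
        gcongr ?_ + _
        exact (htail.of_nonneg_of_le (fun n => by positivity) hle).tsum_le_tsum hle htail
    _ = ∑' n : ℕ, n * |r n| := by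
        rw [add_comm, ← hr.sum_add_tsum_nat_add N]
        simp only [add_comm _ N]

end TailSums

section PartialSums

variable {Ω : Type*} [MeasurableSpace Ω] {μ : Measure Ω} {X : ℕ → Ω → ℝ}

lemma integral_sq_sum_range_succ (hX : ∀ k, MemLp (X k) 2 μ) (N : ℕ) :
    ∫ x, (∑ k ∈ range (N + 1), X k x) ^ 2 ∂μ
      = ∫ x, (∑ k ∈ range N, X k x) ^ 2 ∂μ + 2 * ∑ j ∈ range N, ∫ x, X j x * X N x ∂μ
        + ∫ x, X N x * X N x ∂μ := by
  have hprod : ∀ j k, Integrable (fun x => X j x * X k x) μ := fun j k =>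
    (hX j).integrable_mul (hX k)
  have hsq : Integrable (fun x => (∑ k ∈ range N, X k x) ^ 2) μ :=
    (memLp_finsetSum _ fun k _ => hX k).integrable_sq
  have hexpand : ∀ x, (∑ k ∈ range (N + 1), X k x) ^ 2
      = (∑ k ∈ range N, X k x) ^ 2 + 2 * ∑ j ∈ range N, X j x * X N x + X N x * X N x := by
    intro x
    rw [sum_range_succ, ← sum_mul]
    ring
  have hcross : Integrable (fun x => 2 * ∑ j ∈ range N, X j x * X N x) μ :=
    (integrable_finsetSum _ fun j _ => hprod j N).const_mul 2
  have hfirst : Integrable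
      (fun x => (∑ k ∈ range N, X k x) ^ 2 + 2 * ∑ j ∈ range N, X j x * X N x) μ :=
    hsq.add hcross
  simp_rw [hexpand]
  rw [integral_add hfirst (hprod N N), integral_add hsq hcross, integral_const_mul,
    integral_finsetSum _ fun j _ => hprod j N]

lemma integral_sq_sum_range_eq_sum_range (hX : ∀ k, MemLp (X k) 2 μ)
    (hstat : ∀ j k : ℕ, ∫ x, X j x * X (j + k) x ∂μ = ∫ x, X 0 x * X k x ∂μ) (N : ℕ) :
    ∫ x, (∑ k ∈ range N, X k x) ^ 2 ∂μ
      = ∑ m ∈ range N, (∫ x, X 0 x * X 0 x ∂μ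
          + 2 * ∑ n ∈ range m, ∫ x, X 0 x * X (n + 1) x ∂μ) := by
  induction N with
  | zero => simp
  | succ N ih =>
    have hcov : ∀ j ∈ range N, ∫ x, X j x * X N x ∂μ = ∫ x, X 0 x * X (N - 1 - j + 1) x ∂μ := by
      intro j hj
      rw [← hstat j, show j + (N - 1 - j + 1) = N by have := mem_range.mp hj; omega]
    rw [integral_sq_sum_range_succ hX, ih, sum_congr rfl hcov,
      sum_range_reflect (fun n => ∫ x, X 0 x * X (n + 1) x ∂μ), sum_range_succ,
      ← hstat N 0, add_zero]
    ring

end PartialSums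

lemma summable_nat_mul_abs_of_abs_le_geometric {r : ℕ → ℝ} {C θ : ℝ} (hθ0 : 0 ≤ θ) (hθ1 : θ < 1)
    (hr : ∀ n, |r n| ≤ C * θ ^ n) : Summable fun n : ℕ => n * |r n| := by
  have hgeom := (summable_pow_mul_geometric_of_norm_lt_one 1
    (by rwa [Real.norm_of_nonneg hθ0] : ‖θ‖ < 1)).mul_left C
  refine hgeom.of_nonneg_of_le (fun n => by positivity) fun n => ?_
  calc (n : ℝ) * |r n| ≤ n * (C * θ ^ n) := by gcongr; exact hr n
    _ = C * ((n : ℝ) ^ 1 * θ ^ n) := by ring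

theorem stmt13_general {Ω : Type*} [MeasurableSpace Ω] (μ : Measure Ω)
    (X : ℕ → Ω → ℝ) (hL2 : ∀ k, MemLp (X k) 2 μ)
    (hstat : ∀ j k : ℕ, ∫ x, X j x * X (j + k) x ∂μ = ∫ x, X 0 x * X k x ∂μ)
    (C θ : ℝ) (hθ0 : 0 < θ) (hθ1 : θ < 1)
    (hdecay : ∀ n : ℕ, |∫ x, X 0 x * X n x ∂μ| ≤ C * θ ^ n)
    (hzero : (∫ x, (X 0 x) ^ 2 ∂μ) + 2 * ∑' n : ℕ, ∫ x, X 0 x * X (n + 1) x ∂μ = 0) :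
    (∀ N : ℕ,
      ∫ x, (∑ k ∈ Finset.range N, X k x) ^ 2 ∂μ
        ≤ 2 * N * (∑' n : ℕ, |∫ x, X 0 x * X (N + n) x ∂μ|)
          + 2 * ∑ n ∈ Finset.range N, n * |∫ x, X 0 x * X n x ∂μ|) ∧
    ∃ C' : ℝ, ∀ N : ℕ, ∫ x, (∑ k ∈ Finset.range N, X k x) ^ 2 ∂μ ≤ C' := by
  set r : ℕ → ℝ := fun n => ∫ x, X 0 x * X n x ∂μ
  have hr : Summable r := Summable.of_norm_bounded
    ((summable_geometric_of_lt_one hθ0.le hθ1).mul_left C) hdecay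
  have hnr := summable_nat_mul_abs_of_abs_le_geometric hθ0.le hθ1 hdecay
  have h0 : r 0 + 2 * ∑' n, r (n + 1) = 0 := by simpa only [sq] using hzero
  have hbound : ∀ N : ℕ, ∫ x, (∑ k ∈ range N, X k x) ^ 2 ∂μ
      ≤ 2 * N * ∑' n, |r (N + n)| + 2 * ∑ n ∈ range N, n * |r n| := by
    intro N
    rw [integral_sq_sum_range_eq_sum_range hL2 hstat, sum_range_add_two_mul_sum_range_eq hr h0]
    have htail_summable : Summable fun n => ‖r (N + n)‖ := by
      simpa only [Real.norm_eq_abs, add_comm _ N] using (summable_nat_add_iff N).mpr hr.abs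
    have htail : -∑' n, r (N + n) ≤ ∑' n, |r (N + n)| :=
      (neg_le_abs _).trans (norm_tsum_le_tsum_norm htail_summable)
    have hhead : -∑ n ∈ range N, n * r n ≤ ∑ n ∈ range N, n * |r n| := by
      rw [← sum_neg_distrib]
      exact sum_le_sum fun n _ => by rw [← mul_neg]; gcongr; exact neg_le_abs _
    linarith [mul_le_mul_of_nonneg_left htail N.cast_nonneg]
  exact ⟨hbound, 2 * ∑' n : ℕ, n * |r n|, fun N => (hbound N).trans
    (by linarith [nat_mul_tsum_add_sum_range_le_tsum hnr N])⟩

/-- If moreover the limiting variance vanishes, the partial sums `Z_N = ∑_{k<N} X_k`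
are uniformly bounded in `L²`, with the explicit bound
`E(Z_N²) ≤ 2N ∑_{n≥N} |E(X₀X_n)| + 2 ∑_{n=1}^{N-1} n |E(X₀X_n)| ≤ C' < ∞`. -/
theorem stmt13 {Ω : Type*} [MeasurableSpace Ω] (μ : Measure Ω) [IsProbabilityMeasure μ]
    (X : ℕ → Ω → ℝ) (hL2 : ∀ k, MemLp (X k) 2 μ)
    (hmean : ∀ k, ∫ x, X k x ∂μ = 0)
    (hstat : ∀ j k : ℕ, ∫ x, X j x * X (j + k) x ∂μ = ∫ x, X 0 x * X k x ∂μ)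
    (C θ : ℝ) (hC : 0 < C) (hθ0 : 0 < θ) (hθ1 : θ < 1)
    (hdecay : ∀ n : ℕ, |∫ x, X 0 x * X n x ∂μ| ≤ C * θ ^ n)
    (hzero : (∫ x, (X 0 x) ^ 2 ∂μ) + 2 * ∑' n : ℕ, ∫ x, X 0 x * X (n + 1) x ∂μ = 0) :
    (∀ N : ℕ,
      ∫ x, (∑ k ∈ Finset.range N, X k x) ^ 2 ∂μ
        ≤ 2 * N * (∑' n : ℕ, |∫ x, X 0 x * X (N + n) x ∂μ|)
          + 2 * ∑ n ∈ Finset.range N, n * |∫ x, X 0 x * X n x ∂μ|) ∧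
    ∃ C' : ℝ, ∀ N : ℕ, ∫ x, (∑ k ∈ Finset.range N, X k x) ^ 2 ∂μ ≤ C' :=
  stmt13_general μ X hL2 hstat C θ hθ0 hθ1 hdecay hzero
end
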